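/- arXiv:1311.6560 — 6 statements merged into one kernel-verified Lean document; each statement's English description precedes it below -/
import Mathlib

section
/- Let P be a poset with least element 0 and Z(P)^× ≠ ∅. If [x] and [y] are two distinct vertices of the reduced zero-divisor graph Γ_E(P), then the distance between [x] and [y] in Γ_E(P) equals the distance between x and y in the zero-divisor graph Γ(P). -/
/-- `L(x,y) = {z : z ≤ x ∧ z ≤ y}`, where the least element `0` of the poset is `⊥`. -/
def LSet (P : Type*) [PartialOrder P] [OrderBot P] (x y : P) : Set P := {z | z ≤ x ∧ z ≤ y}

theorem LSet_comm (P : Type*) [PartialOrder P] [OrderBot P] (x y : P) :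
    LSet P x y = LSet P y x := by
  ext z; exact ⟨fun h => ⟨h.2, h.1⟩, fun h => ⟨h.2, h.1⟩⟩

/-- The annihilator of `x`: `ann(x) = {y : L(x,y) = {0}}`. -/
def ann (P : Type*) [PartialOrder P] [OrderBot P] (x : P) : Set P := {y | LSet P x y = {⊥}}

theorem mem_ann_comm (P : Type*) [PartialOrder P] [OrderBot P] (x y : P) :
    y ∈ ann P x ↔ x ∈ ann P y := by
  simp only [ann, Set.mem_setOf_eq, LSet_comm P x y]

/-- The set `Z(P)^× = Z(P) \ {0}` of nonzero zero-divisors of `P`. -/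
def ZDivX (P : Type*) [PartialOrder P] [OrderBot P] : Set P :=
  {x | x ≠ ⊥ ∧ ∃ y : P, y ≠ ⊥ ∧ LSet P x y = {⊥}}

/-- The zero-divisor graph `Γ(P)` on `Z(P)^×`. -/
def zdGraph (P : Type*) [PartialOrder P] [OrderBot P] : SimpleGraph (ZDivX P) where
  Adj a b := (a : P) ≠ (b : P) ∧ LSet P a b = {⊥}
  symm := by
    constructor
    rintro a b ⟨h1, h2⟩
    exact ⟨fun h => h1 h.symm, by rw [LSet_comm]; exact h2⟩
  loopless := by constructor; rintro a ⟨h1, _⟩; exact h1 rfl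

/-- The equivalence `x ∼ y ↔ ann(x) = ann(y)` on `Z(P)^×`. -/
def annSetoid (P : Type*) [PartialOrder P] [OrderBot P] : Setoid (ZDivX P) where
  r a b := ann P a = ann P b
  iseqv := ⟨fun _ => rfl, Eq.symm, Eq.trans⟩

/-- The reduced zero-divisor graph `Γ_E(P)`, on equivalence classes of `Z(P)^×`. -/
def redGraph (P : Type*) [PartialOrder P] [OrderBot P] :
    SimpleGraph (Quotient (annSetoid P)) where
  Adj := Quotient.lift₂ (fun a b => LSet P (a : P) (b : P) = {⊥}) (by
    intro a b a' b' ha hb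
    have ha' : ann P (a : P) = ann P (a' : P) := ha
    have hb' : ann P (b : P) = ann P (b' : P) := hb
    apply propext
    constructor
    · intro h
      have h1 : (b : P) ∈ ann P (a : P) := h
      rw [ha', mem_ann_comm, hb', mem_ann_comm] at h1
      exact h1
    · intro h
      have h1 : (b' : P) ∈ ann P (a' : P) := h
      rw [← ha', mem_ann_comm, ← hb', mem_ann_comm] at h1
      exact h1)
  symm := by
    constructor
    intro x y
    refine Quotient.inductionOn₂ x y ?_
    intro a b h
    have h' : LSet P (a : P) (b : P) = {⊥} := h
    show LSet P (b : P) (a : P) = {⊥}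
    rw [LSet_comm]; exact h'
  loopless := by
    constructor
    intro x
    refine Quotient.inductionOn x ?_
    intro a h
    have h' : LSet P (a : P) (a : P) = {⊥} := h
    have hm : (a : P) ∈ LSet P (a : P) (a : P) := ⟨le_refl _, le_refl _⟩
    rw [h'] at hm
    exact a.2.1 hm

/-
A nonzero zero-divisor is never joined to itself, so `x` and `y` are adjacent in `Γ(P)` exactly
when `L(x,y) = {0}`, which is exactly adjacency of `[x]` and `[y]` in `Γ_E(P)`: `Γ(P)` is the
pullback of `Γ_E(P)` along the surjection `x ↦ [x]`. Images of walks are walks, and a walk between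
distinct vertices `[x] ≠ [y]` lifts, vertex by vertex, to a walk from `x` to `y` of no greater
length (at the last step one jumps straight to `y`, which is adjacent since `[y]` is).
-/

namespace SimpleGraph

variable {V W : Type*} {G : SimpleGraph V} {H : SimpleGraph W}

lemma edist_map_le (f : G →g H) (u v : V) : H.edist (f u) (f v) ≤ G.edist u v := by
  by_cases huv : G.edist u v = ⊤
  · exact huv ▸ le_top
  obtain ⟨p, hp⟩ := exists_walk_of_edist_ne_top huv
  calc H.edist (f u) (f v) ≤ (p.map f).length := edist_le _
    _ = G.edist u v := by rw [Walk.length_map, hp]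

lemma Walk.exists_comap_length_le {f : V → W} (hf : Function.Surjective f) {x y : W}
    (p : H.Walk x y) (hxy : x ≠ y) (u v : V) (hu : f u = x) (hv : f v = y) :
    ∃ q : (H.comap f).Walk u v, q.length ≤ p.length := by
  induction p generalizing u with
  | nil => exact absurd rfl hxy
  | @cons x z y hadj p ih =>
    subst hu hv
    by_cases hz : z = f v
    · subst hz
      exact ⟨.cons (comap_adj.mpr hadj) .nil, by simp⟩
    · obtain ⟨e, rfl⟩ := hf z
      obtain ⟨q, hq⟩ := ih hz e rfl rfl
      exact ⟨.cons (comap_adj.mpr hadj) q, by simpa using hq⟩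

lemma edist_comap_of_surjective {f : V → W} (hf : Function.Surjective f) {u v : V}
    (huv : f u ≠ f v) : (H.comap f).edist u v = H.edist (f u) (f v) := by
  refine le_antisymm ?_ (edist_map_le (Hom.comap f H) u v)
  by_cases h : H.edist (f u) (f v) = ⊤
  · exact h ▸ le_top
  obtain ⟨p, hp⟩ := exists_walk_of_edist_ne_top h
  obtain ⟨q, hq⟩ := p.exists_comap_length_le hf huv u v rfl rfl
  calc (H.comap f).edist u v ≤ q.length := edist_le q
    _ ≤ p.length := by exact_mod_cast hq
    _ = H.edist (f u) (f v) := hp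

end SimpleGraph

section ZeroDivisorGraph

variable {P : Type*} [PartialOrder P] [OrderBot P]

lemma redGraph_adj_mk {c d : ZDivX P} :
    (redGraph P).Adj (Quotient.mk _ c) (Quotient.mk _ d) ↔ LSet P c d = {⊥} :=
  Iff.rfl

lemma zdGraph_eq_comap_redGraph :
    zdGraph P = (redGraph P).comap (Quotient.mk (annSetoid P)) := by
  ext c d
  rw [SimpleGraph.comap_adj, redGraph_adj_mk]
  refine ⟨And.right, fun hcd => ⟨fun hc => c.2.1 ?_, hcd⟩⟩
  have hself : (c : P) ∈ LSet P c d := ⟨le_rfl, hc.le⟩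
  rwa [hcd, Set.mem_singleton_iff] at hself

end ZeroDivisorGraph

theorem stmt0_general (P : Type*) [PartialOrder P] [OrderBot P]
    (a b : ZDivX P)
    (hab : Quotient.mk (annSetoid P) a ≠ Quotient.mk (annSetoid P) b) :
    (redGraph P).edist (Quotient.mk (annSetoid P) a) (Quotient.mk (annSetoid P) b)
      = (zdGraph P).edist a b := by
  rw [zdGraph_eq_comap_redGraph, SimpleGraph.edist_comap_of_surjective Quotient.mk_surjective hab]

/-- If `[x]` and `[y]` are two distinct vertices of `Γ_E(P)`, then the distance between
`[x]` and `[y]` in `Γ_E(P)` equals the distance between `x` and `y` in `Γ(P)`. -/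
theorem stmt0 (P : Type*) [PartialOrder P] [OrderBot P] (hZ : (ZDivX P).Nonempty)
    (a b : ZDivX P)
    (hab : Quotient.mk (annSetoid P) a ≠ Quotient.mk (annSetoid P) b) :
    (redGraph P).edist (Quotient.mk (annSetoid P) a) (Quotient.mk (annSetoid P) b)
      = (zdGraph P).edist a b :=
  stmt0_general P a b hab
end

section
/- Let P be a poset with least element 0 and Z(P)^× ≠ ∅. Then the following are equivalent: (i) the girth of the reduced zero-divisor graph Γ_E(P) is 3; (ii) the girth of the zero-divisor graph Γ(P) is 3; (iii) Γ_E(P) has at least 3 vertices. Consequently, the girth of Γ_E(P) is ∞ (i.e., Γ_E(P) is acyclic) if and only if Γ_E(P) has exactly 2 vertices. -/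
/-!
Write `x ⊥ y` for `L(x,y) = {0}`; this is `Disjoint x y`, and it is inherited by smaller
elements. All three conditions are equivalent to the existence of three nonzero pairwise
orthogonal elements, which is a triangle in both `Γ(P)` and `Γ_E(P)`. Conversely, given three
classes, pick an edge `a ⊥ b` and a class `c` different from both. Different annihilators
`ann a ≠ ann c` yield a nonzero `t` below one of `a, c` and orthogonal to the other; doing the
same for `b, c` and comparing the two witnesses always produces a triangle. Since `Γ_E(P)` has at
least two vertices (an edge `x ⊥ y` has `ann x ≠ ann y`), it has no triangle iff it has exactly two
vertices, and then it has no cycle at all.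
-/

namespace SimpleGraph

variable {V : Type*} {G : SimpleGraph V}

theorem egirth_eq_three_iff : G.egirth = 3 ↔ ∃ a b c, G.Adj a b ∧ G.Adj b c ∧ G.Adj c a := by
  constructor
  · intro h
    have hcyc : ¬G.IsAcyclic := by rw [← egirth_eq_top, h]; decide
    obtain ⟨a, w, -, hlen⟩ := exists_egirth_eq_length.2 hcyc
    have hw : w.length = 3 := by exact_mod_cast (h ▸ hlen).symm
    obtain _ | ⟨h₁, _ | ⟨h₂, _ | ⟨h₃, _ | _⟩⟩⟩ := w <;> simp at hw
    exact ⟨_, _, _, h₁, h₂, h₃⟩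
  · rintro ⟨a, b, c, hab, hbc, hca⟩
    refine le_antisymm ?_ G.three_le_egirth
    have hw : (Walk.cons hab (.cons hbc (.cons hca .nil))).IsCycle :=
      { edges_nodup := by simp [hab.ne, hbc.ne, hca.ne, hab.ne', hca.ne']
        ne_nil := by simp
        support_nodup := by simp [hab.ne', hbc.ne, hca.ne] }
    simpa using egirth_le_length hw

end SimpleGraph

theorem three_le_enatCard_iff {V : Type*} :
    3 ≤ ENat.card V ↔ ∃ a b c : V, a ≠ b ∧ a ≠ c ∧ b ≠ c := by
  constructor
  · intro h
    rw [← Set.encard_univ] at h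
    obtain ⟨t, -, ht⟩ := Set.exists_subset_encard_eq h
    obtain ⟨a, b, c, hab, hac, hbc, -⟩ := Set.encard_eq_three.1 ht
    exact ⟨a, b, c, hab, hac, hbc⟩
  · rintro ⟨a, b, c, hab, hac, hbc⟩
    simpa using (show [a, b, c].Nodup by simp [hab, hac, hbc]).length_le_enatCard

section Poset

variable {P : Type*} [PartialOrder P] [OrderBot P]

theorem LSet_eq_singleton_bot_iff {x y : P} : LSet P x y = {⊥} ↔ Disjoint x y := by
  simp only [Set.eq_singleton_iff_unique_mem, LSet, Set.mem_ofPred_eq, bot_le, true_and,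
    Disjoint, le_bot_iff]
  exact ⟨fun h z hx hy => h z ⟨hx, hy⟩, fun h z hz => h hz.1 hz.2⟩

theorem mem_ann_iff {x y : P} : y ∈ ann P x ↔ Disjoint x y := LSet_eq_singleton_bot_iff

theorem mem_ZDivX_iff {x : P} : x ∈ ZDivX P ↔ x ≠ ⊥ ∧ ∃ y, y ≠ ⊥ ∧ Disjoint x y := by
  simp only [ZDivX, Set.mem_ofPred_eq, LSet_eq_singleton_bot_iff]

theorem mem_ZDivX_of_disjoint {x y : P} (hx : x ≠ ⊥) (hy : y ≠ ⊥) (hxy : Disjoint x y) :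
    x ∈ ZDivX P :=
  mem_ZDivX_iff.2 ⟨hx, y, hy, hxy⟩

theorem exists_ne_bot_le_le_of_not_disjoint {x y : P} (h : ¬Disjoint x y) :
    ∃ z, z ≠ ⊥ ∧ z ≤ x ∧ z ≤ y := by
  simp only [Disjoint, le_bot_iff, not_forall] at h
  obtain ⟨z, hx, hy, hz⟩ := h
  exact ⟨z, hz, hx, hy⟩

theorem ann_ne_ann_of_disjoint {x y : P} (hy : y ≠ ⊥) (h : Disjoint x y) : ann P x ≠ ann P y :=
  fun hxy => hy (disjoint_self.1 (mem_ann_iff.1 (hxy ▸ mem_ann_iff.2 h)))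

theorem exists_le_disjoint_of_ann_ne {x y : P} (h : ann P x ≠ ann P y) :
    ∃ t, t ≠ ⊥ ∧ (t ≤ x ∧ Disjoint t y ∨ t ≤ y ∧ Disjoint t x) := by
  obtain ⟨s, hs⟩ : ∃ s, ¬(Disjoint x s ↔ Disjoint y s) := by
    by_contra! hxy
    exact h (Set.ext fun s => by simp only [mem_ann_iff, hxy s])
  by_cases hxs : Disjoint x s
  · have hys : ¬Disjoint y s := fun hys => hs (iff_of_true hxs hys)
    obtain ⟨t, ht, hty, hts⟩ := exists_ne_bot_le_le_of_not_disjoint hys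
    exact ⟨t, ht, .inr ⟨hty, (hxs.mono_right hts).symm⟩⟩
  · have hys : Disjoint y s := by tauto
    obtain ⟨t, ht, htx, hts⟩ := exists_ne_bot_le_le_of_not_disjoint hxs
    exact ⟨t, ht, .inl ⟨htx, (hys.mono_right hts).symm⟩⟩

variable (P) in
def HasDisjointTriple : Prop :=
  ∃ a b c : P, a ≠ ⊥ ∧ b ≠ ⊥ ∧ c ≠ ⊥ ∧ Disjoint a b ∧ Disjoint b c ∧ Disjoint c a

theorem hasDisjointTriple_of_ann_ne {a b c : P} (ha : a ≠ ⊥) (hb : b ≠ ⊥) (hab : Disjoint a b)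
    (hc : c ∈ ZDivX P) (hac : ann P a ≠ ann P c) (hbc : ann P b ≠ ann P c) :
    HasDisjointTriple P := by
  obtain ⟨hc, q, hq, hcq⟩ := mem_ZDivX_iff.1 hc
  obtain ⟨t, ht, ⟨hta, htc⟩ | ⟨htc, hta⟩⟩ := exists_le_disjoint_of_ann_ne hac <;>
  obtain ⟨u, hu, ⟨hub, huc⟩ | ⟨huc, hub⟩⟩ := exists_le_disjoint_of_ann_ne hbc
  · exact ⟨t, u, c, ht, hu, hc, hab.mono hta hub, huc, htc.symm⟩
  · exact ⟨t, u, b, ht, hu, hb, htc.mono_right huc, hub, hab.mono_left hta |>.symm⟩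
  · exact ⟨u, t, a, hu, ht, ha, huc.mono_right htc, hta, hab.mono_right hub⟩
  · -- `t ⊥ a` and `u ⊥ b` lie below `c`; unless one of them closes a triangle with `a ⊥ b`,
    -- they meet `b` resp. `a` in nonzero elements, which are orthogonal and both orthogonal to `q`.
    by_cases htb : Disjoint t b
    · exact ⟨a, b, t, ha, hb, ht, hab, htb.symm, hta⟩
    by_cases hua : Disjoint u a
    · exact ⟨a, b, u, ha, hb, hu, hab, hub.symm, hua⟩
    obtain ⟨v, hv, hvt, hvb⟩ := exists_ne_bot_le_le_of_not_disjoint htb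
    obtain ⟨w, hw, hwu, hwa⟩ := exists_ne_bot_le_le_of_not_disjoint hua
    exact ⟨v, w, q, hv, hw, hq, (hab.mono hwa hvb).symm,
      hcq.mono_left (hwu.trans huc), (hcq.mono_left (hvt.trans htc)).symm⟩

theorem zdGraph_adj_iff {x y : ZDivX P} :
    (zdGraph P).Adj x y ↔ (x : P) ≠ y ∧ Disjoint (x : P) y :=
  and_congr_right' LSet_eq_singleton_bot_iff

theorem redGraph_adj_mk_iff {x y : ZDivX P} :
    (redGraph P).Adj ⟦x⟧ ⟦y⟧ ↔ Disjoint (x : P) y :=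
  LSet_eq_singleton_bot_iff

theorem zdGraph_egirth_eq_three_iff : (zdGraph P).egirth = 3 ↔ HasDisjointTriple P := by
  simp only [SimpleGraph.egirth_eq_three_iff, zdGraph_adj_iff]
  constructor
  · rintro ⟨a, b, c, ⟨-, hab⟩, ⟨-, hbc⟩, ⟨-, hca⟩⟩
    exact ⟨a, b, c, a.2.1, b.2.1, c.2.1, hab, hbc, hca⟩
  · rintro ⟨a, b, c, ha, hb, hc, hab, hbc, hca⟩
    exact ⟨⟨a, mem_ZDivX_of_disjoint ha hb hab⟩, ⟨b, mem_ZDivX_of_disjoint hb hc hbc⟩,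
      ⟨c, mem_ZDivX_of_disjoint hc ha hca⟩, ⟨hab.ne ha, hab⟩, ⟨hbc.ne hb, hbc⟩, ⟨hca.ne hc, hca⟩⟩

theorem redGraph_egirth_eq_three_iff : (redGraph P).egirth = 3 ↔ HasDisjointTriple P := by
  rw [SimpleGraph.egirth_eq_three_iff]
  constructor
  · rintro ⟨⟨a⟩, ⟨b⟩, ⟨c⟩, hab, hbc, hca⟩
    exact ⟨a, b, c, a.2.1, b.2.1, c.2.1, redGraph_adj_mk_iff.1 hab, redGraph_adj_mk_iff.1 hbc,
      redGraph_adj_mk_iff.1 hca⟩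
  · rintro ⟨a, b, c, ha, hb, hc, hab, hbc, hca⟩
    exact ⟨⟦⟨a, mem_ZDivX_of_disjoint ha hb hab⟩⟧, ⟦⟨b, mem_ZDivX_of_disjoint hb hc hbc⟩⟧,
      ⟦⟨c, mem_ZDivX_of_disjoint hc ha hca⟩⟧, redGraph_adj_mk_iff.2 hab,
      redGraph_adj_mk_iff.2 hbc, redGraph_adj_mk_iff.2 hca⟩

theorem three_le_enatCard_quotient_annSetoid_iff :
    3 ≤ ENat.card (Quotient (annSetoid P)) ↔ HasDisjointTriple P := by
  constructor
  · intro h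
    obtain ⟨⟨x₁⟩, ⟨x₂⟩, ⟨x₃⟩, h₁₂, h₁₃, h₂₃⟩ := three_le_enatCard_iff.1 h
    have ann_ne {x y : ZDivX P} (hxy : (⟦x⟧ : Quotient (annSetoid P)) ≠ ⟦y⟧) :
        ann P x ≠ ann P y :=
      fun h => hxy (Quotient.sound h)
    obtain ⟨hx₁, y, hy, hx₁y⟩ := mem_ZDivX_iff.1 x₁.2
    -- at most one of `x₂, x₃` is equivalent to `y`
    by_cases hy₂ : ann P x₂ = ann P y
    · exact hasDisjointTriple_of_ann_ne hx₁ hy hx₁y x₃.2 (ann_ne h₁₃)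
        (fun h => ann_ne h₂₃ (hy₂.trans h))
    · exact hasDisjointTriple_of_ann_ne hx₁ hy hx₁y x₂.2 (ann_ne h₁₂) (fun h => hy₂ h.symm)
  · intro h
    obtain ⟨A, B, C, hAB, hBC, hCA⟩ :=
      SimpleGraph.egirth_eq_three_iff.1 (redGraph_egirth_eq_three_iff.2 h)
    exact three_le_enatCard_iff.2 ⟨A, B, C, hAB.ne, hCA.ne', hBC.ne⟩

theorem two_le_enatCard_quotient_annSetoid (hZ : (ZDivX P).Nonempty) :
    2 ≤ ENat.card (Quotient (annSetoid P)) := by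
  obtain ⟨x, hxZ⟩ := hZ
  obtain ⟨hx, y, hy, hxy⟩ := mem_ZDivX_iff.1 hxZ
  have : Nontrivial (Quotient (annSetoid P)) :=
    ⟨⟦⟨x, hxZ⟩⟧, ⟦⟨y, mem_ZDivX_of_disjoint hy hx hxy.symm⟩⟧,
      fun h => ann_ne_ann_of_disjoint hy hxy (Quotient.exact h)⟩
  exact Order.add_one_le_of_lt ENat.one_lt_card

end Poset

/-- `girth Γ_E(P) = 3 ↔ girth Γ(P) = 3 ↔ |V(Γ_E(P))| ≥ 3`; consequently,
`girth Γ_E(P) = ∞` iff `|V(Γ_E(P))| = 2`. -/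
theorem stmt3 (P : Type*) [PartialOrder P] [OrderBot P] (hZ : (ZDivX P).Nonempty) :
    (((redGraph P).egirth = 3 ↔ (zdGraph P).egirth = 3) ∧
      ((redGraph P).egirth = 3 ↔ 3 ≤ ENat.card (Quotient (annSetoid P)))) ∧
    ((redGraph P).egirth = ⊤ ↔ ENat.card (Quotient (annSetoid P)) = 2) := by
  have hred := redGraph_egirth_eq_three_iff (P := P)
  have hcard3 := three_le_enatCard_quotient_annSetoid_iff (P := P)
  refine ⟨⟨by rw [hred, zdGraph_egirth_eq_three_iff], by rw [hred, hcard3]⟩,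
    fun htop => ?_, fun hcard => ?_⟩
  · have hlt : ENat.card (Quotient (annSetoid P)) < 3 := by
      rw [← not_le, hcard3, ← hred, htop]
      decide
    exact le_antisymm (Order.le_of_lt_add_one hlt) (two_le_enatCard_quotient_annSetoid hZ)
  · exact SimpleGraph.egirth_eq_top.2 (SimpleGraph.IsAcyclic.of_card_le_two hcard.le)
end

section
/- Let P be a poset with least element 0 and Z(P)^× ≠ ∅. Then no two distinct vertices of the reduced zero-divisor graph Γ_E(P) have the same neighborhood; equivalently, for [x], [y] ∈ V(Γ_E(P)), one has nbd([x]) = nbd([y]) if and only if ann(x) = ann(y). -/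
section ReducedGraph

variable {P : Type*} [PartialOrder P] [OrderBot P]

theorem bot_mem_ann (x : P) : ⊥ ∈ ann P x :=
  Set.ext fun _ => ⟨fun h => le_bot_iff.mp h.2, by rintro rfl; exact ⟨bot_le, le_rfl⟩⟩

theorem mem_ZDivX_of_mem_ann {x y : P} (hx : x ≠ ⊥) (hy : y ≠ ⊥) (h : y ∈ ann P x) :
    y ∈ ZDivX P :=
  ⟨hy, x, hx, (mem_ann_comm P x y).mp h⟩

theorem redGraph_adj_mk_iff_s5 (a b : ZDivX P) :
    (redGraph P).Adj (Quotient.mk _ a) (Quotient.mk _ b) ↔ (b : P) ∈ ann P a :=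
  Iff.rfl

theorem ann_subset_of_neighborSet_subset {a b : ZDivX P}
    (h : (redGraph P).neighborSet (Quotient.mk _ a) ⊆
      (redGraph P).neighborSet (Quotient.mk _ b)) :
    ann P (a : P) ⊆ ann P (b : P) := by
  intro y hy
  by_cases hy0 : y = ⊥
  · exact hy0 ▸ bot_mem_ann _
  · let c : ZDivX P := ⟨y, mem_ZDivX_of_mem_ann a.2.1 hy0 hy⟩
    have hac : Quotient.mk _ c ∈ (redGraph P).neighborSet (Quotient.mk _ a) :=
      (redGraph_adj_mk_iff_s5 a c).mpr hy
    exact (redGraph_adj_mk_iff_s5 b c).mp (h hac)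

theorem redGraph_neighborSet_mk_eq_iff (a b : ZDivX P) :
    (redGraph P).neighborSet (Quotient.mk _ a) = (redGraph P).neighborSet (Quotient.mk _ b) ↔
      ann P (a : P) = ann P (b : P) := by
  refine ⟨fun h => ?_, fun h => by rw [Quotient.sound (s := annSetoid P) h]⟩
  exact (ann_subset_of_neighborSet_subset h.le).antisymm (ann_subset_of_neighborSet_subset h.ge)

end ReducedGraph

theorem stmt5_general (P : Type*) [PartialOrder P] [OrderBot P] :
    (∀ u v : Quotient (annSetoid P),
        (redGraph P).neighborSet u = (redGraph P).neighborSet v → u = v) ∧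
    (∀ a b : ZDivX P,
        (redGraph P).neighborSet (Quotient.mk (annSetoid P) a)
            = (redGraph P).neighborSet (Quotient.mk (annSetoid P) b)
          ↔ ann P (a : P) = ann P (b : P)) :=
  ⟨fun u v => Quotient.inductionOn₂ u v fun a b h =>
      Quotient.sound ((redGraph_neighborSet_mk_eq_iff a b).mp h),
    redGraph_neighborSet_mk_eq_iff⟩

/-- No two distinct vertices of `Γ_E(P)` have the same neighborhood; equivalently,
`nbd([x]) = nbd([y])` iff `ann(x) = ann(y)`. -/
theorem stmt5 (P : Type*) [PartialOrder P] [OrderBot P] (hZ : (ZDivX P).Nonempty) :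
    (∀ u v : Quotient (annSetoid P),
        (redGraph P).neighborSet u = (redGraph P).neighborSet v → u = v) ∧
    (∀ a b : ZDivX P,
        (redGraph P).neighborSet (Quotient.mk (annSetoid P) a)
            = (redGraph P).neighborSet (Quotient.mk (annSetoid P) b)
          ↔ ann P (a : P) = ann P (b : P)) :=
  stmt5_general P
end

section
/- Let P be a poset with least element 0 and Z(P)^× ≠ ∅. For x, y ∈ Z(P)^×, one has ann(x) ⊊ ann(y) if and only if nbd([x]) ⊊ nbd([y]) in the reduced zero-divisor graph Γ_E(P). -/
namespace ZeroDivisorPoset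

variable {P : Type*} [PartialOrder P] [OrderBot P]

lemma bot_mem_ann (x : P) : ⊥ ∈ ann P x := by
  ext z
  simp only [LSet, le_bot_iff, Set.mem_ofPred_eq, Set.mem_singleton_iff, and_iff_right_iff_imp]
  rintro rfl
  exact bot_le

lemma mem_ZDivX_of_mem_ann {x b : P} (hx : x ≠ ⊥) (hb : b ≠ ⊥) (hbx : b ∈ ann P x) :
    b ∈ ZDivX P :=
  ⟨hb, x, hx, (mem_ann_comm P x b).1 hbx⟩

lemma mem_neighborSet_redGraph_iff (x b : ZDivX P) :
    Quotient.mk (annSetoid P) b ∈ (redGraph P).neighborSet (Quotient.mk (annSetoid P) x) ↔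
      (b : P) ∈ ann P (x : P) :=
  Iff.rfl

/-- Every nonzero element of `ann(x)` is itself a vertex of `Γ_E(P)`, so the annihilator is
recovered from the neighbourhood of `[x]`. -/
lemma ann_subset_ann_iff_neighborSet_subset (x y : ZDivX P) :
    ann P (x : P) ⊆ ann P (y : P) ↔
      (redGraph P).neighborSet (Quotient.mk (annSetoid P) x)
        ⊆ (redGraph P).neighborSet (Quotient.mk (annSetoid P) y) := by
  constructor
  · intro h v
    induction v using Quotient.inductionOn with
    | h b => simpa only [mem_neighborSet_redGraph_iff] using @h b
  · intro h b hb
    by_cases hb0 : b = ⊥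
    · exact hb0 ▸ bot_mem_ann _
    · have hbZ := mem_ZDivX_of_mem_ann x.2.1 hb0 hb
      exact (mem_neighborSet_redGraph_iff y ⟨b, hbZ⟩).1 (h hb)

end ZeroDivisorPoset

theorem stmt10_general (P : Type*) [PartialOrder P] [OrderBot P]
    (x y : ZDivX P) :
    ann P (x : P) ⊂ ann P (y : P) ↔
      (redGraph P).neighborSet (Quotient.mk (annSetoid P) x)
        ⊂ (redGraph P).neighborSet (Quotient.mk (annSetoid P) y) := by
  rw [Set.ssubset_def, Set.ssubset_def,
    ZeroDivisorPoset.ann_subset_ann_iff_neighborSet_subset x y,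
    ZeroDivisorPoset.ann_subset_ann_iff_neighborSet_subset y x]

/-- For `x, y ∈ Z(P)^×`, `ann(x) ⊊ ann(y)` iff `nbd([x]) ⊊ nbd([y])` in `Γ_E(P)`. -/
theorem stmt10 (P : Type*) [PartialOrder P] [OrderBot P] (hZ : (ZDivX P).Nonempty)
    (x y : ZDivX P) :
    ann P (x : P) ⊂ ann P (y : P) ↔
      (redGraph P).neighborSet (Quotient.mk (annSetoid P) x)
        ⊂ (redGraph P).neighborSet (Quotient.mk (annSetoid P) y) :=
  stmt10_general P x y
end

section
/- Let P be a poset with least element 0 and Z(P)^× ≠ ∅. Let x ∈ Z(P)^× and let z ∈ Z(P)^× be such that ann(z) is an annihilator prime ideal of P. Then ann(x) ⊄ ann(z) if and only if L(x,z) = {0}; equivalently, nbd([x]) ⊆ nbd([z]) in Γ_E(P) if and only if the vertices [x] and [z] are not adjacent in Γ_E(P). -/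
/-- `I` is an ideal of the poset `P`: a nonempty downward-closed subset. -/
def IsIdeal (P : Type*) [PartialOrder P] [OrderBot P] (I : Set P) : Prop :=
  I.Nonempty ∧ ∀ x ∈ I, ∀ y : P, y ≤ x → y ∈ I

/-- `I` is a prime ideal of the poset `P`: a proper ideal such that
`L(x,y) ⊆ I` implies `x ∈ I` or `y ∈ I`. -/
def IsPrimeIdeal (P : Type*) [PartialOrder P] [OrderBot P] (I : Set P) : Prop :=
  IsIdeal P I ∧ I ≠ Set.univ ∧ ∀ x y : P, LSet P x y ⊆ I → x ∈ I ∨ y ∈ I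

/-- The family `𝔄 = {ann(x) : x ∈ P \ {0}}`. -/
def AnnFam (P : Type*) [PartialOrder P] [OrderBot P] : Set (Set P) :=
  {I | ∃ x : P, x ≠ ⊥ ∧ ann P x = I}

/-- `Ann(P)`, the set of annihilator prime ideals of `P`. -/
def AnnPrimes (P : Type*) [PartialOrder P] [OrderBot P] : Set (Set P) :=
  {I | IsPrimeIdeal P I ∧ ∃ x : P, ann P x = I}

/-- `P` satisfies the ACC for annihilators: every nonempty subfamily of `𝔄` has a
maximal element. -/
def ACCAnn (P : Type*) [PartialOrder P] [OrderBot P] : Prop :=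
  ∀ S : Set (Set P), S ⊆ AnnFam P → S.Nonempty → ∃ I ∈ S, ∀ J ∈ S, I ⊆ J → I = J

theorem SimpleGraph.not_adj_of_neighborSet_subset {V : Type*} {G : SimpleGraph V} {v w : V}
    (h : G.neighborSet v ⊆ G.neighborSet w) : ¬ G.Adj v w :=
  fun hvw => G.irrefl (h hvw)

section

variable {P : Type*} [PartialOrder P] [OrderBot P]

theorem IsIdeal.bot_mem {I : Set P} (hI : IsIdeal P I) : ⊥ ∈ I := by
  obtain ⟨⟨a, ha⟩, hdown⟩ := hI
  exact hdown a ha ⊥ bot_le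

theorem not_mem_ann_self {z : P} (hz : z ≠ ⊥) : z ∉ ann P z := by
  intro h
  have hzz : z ∈ LSet P z z := ⟨le_rfl, le_rfl⟩
  rw [show LSet P z z = {⊥} from h] at hzz
  exact hz hzz

/-- Primeness applied to `L(x,y) = {0} ⊆ ann(z)` puts each `y ∈ ann(x)` into `ann(z)` unless
`x ∈ ann(z)`; conversely `z ∉ ann(z)` witnesses `ann(x) ⊄ ann(z)` once `z ∈ ann(x)`. -/
theorem not_ann_subset_iff_mem_ann {x z : P} (hz : z ≠ ⊥) (hp : IsPrimeIdeal P (ann P z)) :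
    ¬ ann P x ⊆ ann P z ↔ z ∈ ann P x := by
  constructor
  · intro hnsub
    by_contra hzx
    refine hnsub fun y (hy : LSet P x y = {⊥}) => ?_
    have hxy : LSet P x y ⊆ ann P z := by
      rw [hy, Set.singleton_subset_iff]
      exact hp.1.bot_mem
    exact (hp.2.2 x y hxy).resolve_left fun hx => hzx ((mem_ann_comm P x z).2 hx)
  · exact fun hzx hsub => not_mem_ann_self hz (hsub hzx)

theorem redGraph_neighborSet_mono {a b : ZDivX P} (h : ann P (a : P) ⊆ ann P (b : P)) :
    (redGraph P).neighborSet (Quotient.mk (annSetoid P) a)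
      ⊆ (redGraph P).neighborSet (Quotient.mk (annSetoid P) b) := by
  intro w
  induction w using Quotient.inductionOn with
  | h c => exact fun (hac : (c : P) ∈ ann P a) => h hac

end

theorem stmt11_general (P : Type*) [PartialOrder P] [OrderBot P]
    (x z : ZDivX P) (hp : IsPrimeIdeal P (ann P (z : P))) :
    (¬ ann P (x : P) ⊆ ann P (z : P) ↔ LSet P (x : P) (z : P) = {⊥}) ∧
    ((redGraph P).neighborSet (Quotient.mk (annSetoid P) x)
        ⊆ (redGraph P).neighborSet (Quotient.mk (annSetoid P) z) ↔
      ¬ (redGraph P).Adj (Quotient.mk (annSetoid P) x) (Quotient.mk (annSetoid P) z)) := by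
  have key : ¬ ann P (x : P) ⊆ ann P (z : P) ↔ LSet P (x : P) (z : P) = {⊥} :=
    not_ann_subset_iff_mem_ann z.2.1 hp
  refine ⟨key, SimpleGraph.not_adj_of_neighborSet_subset, fun hnadj => ?_⟩
  exact redGraph_neighborSet_mono (not_not.1 fun h => hnadj (key.1 h))

/-- For `x ∈ Z(P)^×` and `z ∈ Z(P)^×` with `ann(z)` an annihilator prime ideal:
`ann(x) ⊄ ann(z)` iff `L(x,z) = {0}`; equivalently, `nbd([x]) ⊆ nbd([z])` iff
`[x]` and `[z]` are not adjacent in `Γ_E(P)`. -/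
theorem stmt11 (P : Type*) [PartialOrder P] [OrderBot P] (hZ : (ZDivX P).Nonempty)
    (x z : ZDivX P) (hp : IsPrimeIdeal P (ann P (z : P))) :
    (¬ ann P (x : P) ⊆ ann P (z : P) ↔ LSet P (x : P) (z : P) = {⊥}) ∧
    ((redGraph P).neighborSet (Quotient.mk (annSetoid P) x)
        ⊆ (redGraph P).neighborSet (Quotient.mk (annSetoid P) z) ↔
      ¬ (redGraph P).Adj (Quotient.mk (annSetoid P) x) (Quotient.mk (annSetoid P) z)) :=
  stmt11_general P x z hp
end

section
/- Let P be a poset with least element 0 and Z(P)^× ≠ ∅, and let x, y ∈ Z(P)^×. If ann(x) ∪ ann(y) ⊆ ann(z) for some z ∈ P such that ann(z) is an annihilator prime ideal of P, then L(x,y) ≠ {0} (i.e., [x] and [y] are not adjacent in Γ_E(P)). Conversely, if P satisfies the ascending chain condition for annihilators and L(x,y) ≠ {0}, then there exists z ∈ P with ann(z) an annihilator prime ideal of P such that ann(x) ∪ ann(y) ⊆ ann(z). -/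
/-!
If `L(x,y) = {0}` then `y ∈ ann(x)`, so `y ∈ ann(z)`, i.e. `z ∈ ann(y) ⊆ ann(z)`, which forces
`z = 0` and `ann(z) = P`, not a proper ideal. Conversely, pick `0 ≠ w ∈ L(x,y)`, so that
`ann(x) ∪ ann(y) ⊆ ann(w)`. By ACC there is a maximal annihilator `ann(z) ⊇ ann(w)` with `z ≠ 0`;
maximality means `ann(t) = ann(z)` for every `0 ≠ t ≤ z`, and this makes `ann(z)` prime: if
`a ∉ ann(z)`, a witness `0 ≠ t ≤ z, a` gives `b ∈ ann(t) = ann(z)` whenever `L(a,b) ⊆ ann(z)`.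
-/

section Annihilators

variable {P : Type*} [PartialOrder P] [OrderBot P]

lemma mem_ann_iff_s12 {x a : P} : a ∈ ann P x ↔ ∀ z, z ≤ x → z ≤ a → z = ⊥ := by
  simp only [ann, LSet, Set.mem_ofPred_eq, Set.eq_singleton_iff_unique_mem, bot_le, and_self,
    true_and, and_imp]

lemma ann_antitone {w x : P} (h : w ≤ x) : ann P x ⊆ ann P w := fun _ ha =>
  mem_ann_iff_s12.2 fun z hz hza => mem_ann_iff_s12.1 ha z (hz.trans h) hza

lemma ann_isIdeal (x : P) : IsIdeal P (ann P x) :=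
  ⟨⟨⊥, mem_ann_iff_s12.2 fun _ _ hz => le_bot_iff.1 hz⟩,
    fun _ ha _ hba => mem_ann_iff_s12.2 fun z hz hzb => mem_ann_iff_s12.1 ha z hz (hzb.trans hba)⟩

lemma eq_bot_of_mem_ann_self {x : P} (h : x ∈ ann P x) : x = ⊥ :=
  mem_ann_iff_s12.1 h x le_rfl le_rfl

lemma ann_bot : ann P (⊥ : P) = Set.univ :=
  Set.eq_univ_of_forall fun _ => mem_ann_iff_s12.2 fun _ hz _ => le_bot_iff.1 hz

lemma ann_ne_univ {x : P} (hx : x ≠ ⊥) : ann P x ≠ Set.univ := fun h =>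
  hx (eq_bot_of_mem_ann_self (h ▸ Set.mem_univ x))

lemma exists_ne_bot_of_LSet_ne {x y : P} (h : LSet P x y ≠ {⊥}) :
    ∃ w, w ≠ ⊥ ∧ w ≤ x ∧ w ≤ y := by
  by_contra! hw
  exact h (mem_ann_iff_s12.2 fun w hwx hwy => by_contra fun hne => hw w hne hwx hwy)

lemma LSet_ne_of_ann_union_subset {x y z : P} (hz : ann P z ≠ Set.univ)
    (hsub : ann P x ∪ ann P y ⊆ ann P z) : LSet P x y ≠ {⊥} := by
  intro hxy
  have hzy : z ∈ ann P y := (mem_ann_comm P z y).1 (hsub (Or.inl hxy))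
  have hzz : z = ⊥ := eq_bot_of_mem_ann_self (hsub (Or.inr hzy))
  exact hz (hzz ▸ ann_bot)

lemma isPrimeIdeal_ann_of_maximal {z : P} (hz : z ≠ ⊥)
    (hmax : ∀ t, t ≠ ⊥ → t ≤ z → ann P t ⊆ ann P z) : IsPrimeIdeal P (ann P z) := by
  refine ⟨ann_isIdeal z, ann_ne_univ hz, fun a b hab => or_iff_not_imp_left.2 fun ha => ?_⟩
  obtain ⟨t, ht, htz, hta⟩ : ∃ t, t ≠ ⊥ ∧ t ≤ z ∧ t ≤ a := by
    rw [mem_ann_comm, mem_ann_iff_s12] at ha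
    push Not at ha
    obtain ⟨t, hta, htz, ht⟩ := ha
    exact ⟨t, ht, htz, hta⟩
  refine hmax t ht htz (mem_ann_iff_s12.2 fun s hst hsb => ?_)
  exact mem_ann_iff_s12.1 (hab ⟨hst.trans hta, hsb⟩) s (hst.trans htz) le_rfl

lemma exists_maximal_ann_superset (hacc : ACCAnn P) {w : P} (hw : w ≠ ⊥) :
    ∃ z, z ≠ ⊥ ∧ ann P w ⊆ ann P z ∧ ∀ t, t ≠ ⊥ → t ≤ z → ann P t ⊆ ann P z := by
  let S : Set (Set P) := {I | ∃ v, v ≠ ⊥ ∧ ann P v = I ∧ ann P w ⊆ I}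
  obtain ⟨_, ⟨z, hz, rfl, hwz⟩, hmax⟩ :=
    hacc S (fun _ ⟨v, hv, hvI, _⟩ => ⟨v, hv, hvI⟩) ⟨ann P w, w, hw, rfl, subset_rfl⟩
  refine ⟨z, hz, hwz, fun t ht htz => ?_⟩
  have hzt : ann P z ⊆ ann P t := ann_antitone htz
  exact (hmax _ ⟨t, ht, rfl, hwz.trans hzt⟩ hzt).ge

lemma exists_isPrimeIdeal_ann_superset (hacc : ACCAnn P) {w : P} (hw : w ≠ ⊥) :
    ∃ z, IsPrimeIdeal P (ann P z) ∧ ann P w ⊆ ann P z := by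
  obtain ⟨z, hz, hwz, hmax⟩ := exists_maximal_ann_superset hacc hw
  exact ⟨z, isPrimeIdeal_ann_of_maximal hz hmax, hwz⟩

end Annihilators

theorem stmt12_general (P : Type*) [PartialOrder P] [OrderBot P]
    (x y : ZDivX P) :
    ((∃ z : P, IsPrimeIdeal P (ann P z) ∧ ann P (x : P) ∪ ann P (y : P) ⊆ ann P z) →
        LSet P (x : P) (y : P) ≠ {⊥}) ∧
    (ACCAnn P → LSet P (x : P) (y : P) ≠ {⊥} →
      ∃ z : P, IsPrimeIdeal P (ann P z) ∧ ann P (x : P) ∪ ann P (y : P) ⊆ ann P z) := by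
  refine ⟨fun ⟨z, hprime, hsub⟩ => LSet_ne_of_ann_union_subset hprime.2.1 hsub, fun hacc h => ?_⟩
  obtain ⟨w, hw, hwx, hwy⟩ := exists_ne_bot_of_LSet_ne h
  obtain ⟨z, hprime, hwz⟩ := exists_isPrimeIdeal_ann_superset hacc hw
  exact ⟨z, hprime, Set.union_subset ((ann_antitone hwx).trans hwz) ((ann_antitone hwy).trans hwz)⟩

/-- If `ann(x) ∪ ann(y) ⊆ ann(z)` for some annihilator prime ideal `ann(z)`, then
`L(x,y) ≠ {0}`; conversely, if `P` satisfies the ACC for annihilators and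
`L(x,y) ≠ {0}`, then such an annihilator prime ideal `ann(z)` exists. -/
theorem stmt12 (P : Type*) [PartialOrder P] [OrderBot P] (hZ : (ZDivX P).Nonempty)
    (x y : ZDivX P) :
    ((∃ z : P, IsPrimeIdeal P (ann P z) ∧ ann P (x : P) ∪ ann P (y : P) ⊆ ann P z) →
        LSet P (x : P) (y : P) ≠ {⊥}) ∧
    (ACCAnn P → LSet P (x : P) (y : P) ≠ {⊥} →
      ∃ z : P, IsPrimeIdeal P (ann P z) ∧ ann P (x : P) ∪ ann P (y : P) ⊆ ann P z) :=
  stmt12_general P x y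
end
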